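/- arXiv:2312.00646 — 2 statements merged into one kernel-verified Lean document; each statement's English description precedes it below -/
import Mathlib

section
/- Let (α_ℓ) be nonnegative reals with α_ℓ ≤ a_0 ∏_{θ=0}^{ℓ} ρ_θ^{r_θ−1} + Σ_{τ=1}^{ℓ} V_τ ∏_{ψ=τ}^{ℓ} ρ_ψ^{r_ψ−1} for all ℓ. Suppose V_∞ := max{a_0, sup_ℓ V_ℓ} < ∞, ρ_∞ := sup_ℓ ρ_ℓ ∈ (0,1), and r_ℓ ≥ 2 for all ℓ. Then limsup_{ℓ→∞} α_ℓ ≤ V_∞ · ρ_∞ / (1 − ρ_∞). -/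
open Finset Filter

/-- Theorem 3: asymptotic tracking error bound. -/
theorem asymptotic_tracking_error
    (α V ρ : ℕ → ℝ) (r : ℕ → ℕ) (a₀ V_inf ρ_inf : ℝ)
    (hα : ∀ ℓ, 0 ≤ α ℓ) (ha₀ : 0 ≤ a₀)
    (hV : ∀ ℓ, 0 ≤ V ℓ) (hρ : ∀ ℓ, ρ ℓ ∈ Set.Ioo (0:ℝ) 1)
    (hbound : ∀ ℓ, α ℓ ≤ a₀ * ∏ θ ∈ Finset.range (ℓ + 1), ρ θ ^ (r θ - 1)
            + ∑ τ ∈ Finset.Icc 1 ℓ, V τ * ∏ ψ ∈ Finset.Icc τ ℓ, ρ ψ ^ (r ψ - 1))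
    (hVinf : V_inf = max a₀ (⨆ ℓ, V ℓ)) (hVbdd : BddAbove (Set.range V))
    (hρinf : ρ_inf = ⨆ ℓ, ρ ℓ) (hρinf1 : ρ_inf < 1)
    (hr : ∀ ℓ, 2 ≤ r ℓ) :
    Filter.limsup α Filter.atTop ≤ V_inf * ρ_inf / (1 - ρ_inf) := by
  have hρbdd : BddAbove (Set.range ρ) := ⟨1, by rintro x ⟨i, rfl⟩; exact (hρ i).2.le⟩
  have hρle : ∀ ℓ, ρ ℓ ≤ ρ_inf := fun ℓ => hρinf ▸ le_ciSup hρbdd ℓ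
  have hρ0 : 0 < ρ_inf := lt_of_lt_of_le (hρ 0).1 (hρle 0)
  have hVle : ∀ ℓ, V ℓ ≤ V_inf := fun ℓ =>
    hVinf ▸ le_trans (le_ciSup hVbdd ℓ) (le_max_right _ _)
  have ha₀le : a₀ ≤ V_inf := hVinf ▸ le_max_left _ _
  have hV0 : 0 ≤ V_inf := le_trans ha₀ ha₀le
  have h1ρ : 0 < 1 - ρ_inf := by linarith
  -- each factor is at most ρ_inf
  have hfac : ∀ ψ, ρ ψ ^ (r ψ - 1) ≤ ρ_inf := fun ψ => by
    have h1 : r ψ - 1 ≠ 0 := by have := hr ψ; omega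
    exact le_trans (pow_le_of_le_one (hρ ψ).1.le (hρ ψ).2.le h1) (hρle ψ)
  have hprod : ∀ s : Finset ℕ, ∏ ψ ∈ s, ρ ψ ^ (r ψ - 1) ≤ ρ_inf ^ s.card := by
    intro s
    calc ∏ ψ ∈ s, ρ ψ ^ (r ψ - 1) ≤ ∏ _ψ ∈ s, ρ_inf :=
          Finset.prod_le_prod (fun i _ => pow_nonneg (hρ i).1.le _) (fun i _ => hfac i)
      _ = ρ_inf ^ s.card := by rw [Finset.prod_const]
  -- pointwise bound
  have key : ∀ ℓ, α ℓ ≤ V_inf * ρ_inf / (1 - ρ_inf) := by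
    intro ℓ
    have hS : ∑ j ∈ range (ℓ + 1), ρ_inf ^ j ≤ 1 / (1 - ρ_inf) := by
      rw [le_div_iff₀ h1ρ]
      have := geom_sum_mul ρ_inf (ℓ + 1)
      nlinarith [pow_nonneg hρ0.le (ℓ + 1)]
    have step1 : α ℓ ≤ V_inf * ρ_inf ^ (ℓ + 1)
        + ∑ τ ∈ Icc 1 ℓ, V_inf * ρ_inf ^ (ℓ + 1 - τ) := by
      refine (hbound ℓ).trans (add_le_add ?_ (Finset.sum_le_sum fun τ hτ => ?_))
      · calc a₀ * ∏ θ ∈ range (ℓ + 1), ρ θ ^ (r θ - 1)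
            ≤ V_inf * ρ_inf ^ (range (ℓ + 1)).card := by
              apply mul_le_mul ha₀le (hprod _) ?_ hV0
              exact Finset.prod_nonneg fun i _ => pow_nonneg (hρ i).1.le _
          _ = V_inf * ρ_inf ^ (ℓ + 1) := by rw [Finset.card_range]
      · have hmem := Finset.mem_Icc.mp hτ
        calc V τ * ∏ ψ ∈ Icc τ ℓ, ρ ψ ^ (r ψ - 1)
            ≤ V_inf * ρ_inf ^ (Icc τ ℓ).card := by
              apply mul_le_mul (hVle τ) (hprod _) ?_ hV0
              exact Finset.prod_nonneg fun i _ => pow_nonneg (hρ i).1.le _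
          _ = V_inf * ρ_inf ^ (ℓ + 1 - τ) := by rw [Nat.card_Icc]
    have hsum : ρ_inf ^ (ℓ + 1) + ∑ τ ∈ Icc 1 ℓ, ρ_inf ^ (ℓ + 1 - τ)
        = ρ_inf * ∑ j ∈ range (ℓ + 1), ρ_inf ^ j := by
      have h1 : ∑ τ ∈ Icc 1 ℓ, ρ_inf ^ (ℓ + 1 - τ)
          = ∑ i ∈ range ℓ, ρ_inf ^ (ℓ - i) := by
        rw [← Finset.Ico_add_one_right_eq_Icc, Finset.sum_Ico_eq_sum_range]
        exact Finset.sum_congr rfl fun i hi => by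
          congr 1
          omega
      have h2 : ∑ i ∈ range ℓ, ρ_inf ^ (ℓ - i) = ∑ i ∈ range ℓ, ρ_inf ^ (i + 1) := by
        rw [← Finset.sum_range_reflect]
        exact Finset.sum_congr rfl fun i hi => by
          congr 1
          have := Finset.mem_range.mp hi
          omega
      rw [h1, h2, Finset.mul_sum]
      rw [Finset.sum_range_succ_comm]
      congr 1
      · ring
      · exact Finset.sum_congr rfl fun i _ => by ring
    calc α ℓ ≤ V_inf * ρ_inf ^ (ℓ + 1) + ∑ τ ∈ Icc 1 ℓ, V_inf * ρ_inf ^ (ℓ + 1 - τ) := step1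
      _ = V_inf * (ρ_inf ^ (ℓ + 1) + ∑ τ ∈ Icc 1 ℓ, ρ_inf ^ (ℓ + 1 - τ)) := by
          rw [← Finset.mul_sum, mul_add]
      _ = V_inf * (ρ_inf * ∑ j ∈ range (ℓ + 1), ρ_inf ^ j) := by rw [hsum]
      _ ≤ V_inf * (ρ_inf * (1 / (1 - ρ_inf))) := by
          apply mul_le_mul_of_nonneg_left _ hV0
          exact mul_le_mul_of_nonneg_left hS hρ0.le
      _ = V_inf * ρ_inf / (1 - ρ_inf) := by field_simp
  exact Filter.limsup_le_of_le (Filter.isCoboundedUnder_le_of_le atTop hα)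
    (Filter.Eventually.of_forall key)
end

section
/- If α_ℓ ≤ V_max ρ_max^{r−1} Σ_{τ=0}^{ℓ} ρ_max^{τ(r−1)} for all ℓ ∈ {0,…,T}, with ρ_max ∈ (0,1), r ≥ 2, V_max > 0, and φ > 0, and if r ≥ 1 + ln((V_max ρ_max^{(T+2)(r−1)} + φ)/(V_max + φ)) / ln(ρ_max), then α_ℓ ≤ φ for all ℓ ∈ {0,…,T}. -/
open Finset

/-- Theorem 4: operation-count bound over a finite horizon. -/
theorem finite_horizon_operation_count
    (α : ℕ → ℝ) (T : ℕ) (Vmax ρmax φ : ℝ) (r : ℕ)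
    (hα : ∀ ℓ ≤ T, 0 ≤ α ℓ)
    (hρ : ρmax ∈ Set.Ioo (0:ℝ) 1) (hV : 0 < Vmax) (hφ : 0 < φ) (hr2 : 2 ≤ r)
    (hbound : ∀ ℓ ≤ T, α ℓ ≤ Vmax * ρmax ^ (r - 1) * ∑ τ ∈ Finset.range (ℓ + 1), ρmax ^ (τ * (r - 1)))
    (hrlog : (r : ℝ) ≥ 1 + Real.log ((Vmax * ρmax ^ ((T + 2) * (r - 1)) + φ) / (Vmax + φ)) / Real.log ρmax) :
    ∀ ℓ ≤ T, α ℓ ≤ φ := by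
  obtain ⟨hq0, hq1⟩ := hρ
  set x := ρmax ^ (r - 1) with hxdef
  have hx0 : 0 < x := pow_pos hq0 _
  have hx1 : x < 1 := pow_lt_one₀ hq0.le hq1 (by omega)
  have hVφ : 0 < Vmax + φ := by linarith
  set A := (Vmax * ρmax ^ ((T + 2) * (r - 1)) + φ) / (Vmax + φ) with hAdef
  have hA0 : 0 < A := by positivity
  have hlogq : Real.log ρmax < 0 := Real.log_neg hq0 hq1
  -- from the log condition, deduce x ≤ A
  have hdiv : Real.log A / Real.log ρmax ≤ (r : ℝ) - 1 := by linarith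
  have h1 : ((r : ℝ) - 1) * Real.log ρmax ≤ Real.log A := by
    have := mul_le_mul_of_nonpos_right hdiv hlogq.le
    rwa [div_mul_cancel₀ _ (ne_of_lt hlogq)] at this
  have hlogx : Real.log x ≤ Real.log A := by
    rw [hxdef, Real.log_pow]
    have : ((r - 1 : ℕ) : ℝ) = (r : ℝ) - 1 := by
      have : (1:ℕ) ≤ r := by omega
      push_cast [Nat.cast_sub this]
      ring
    rw [this]; exact h1
  have hxA : x ≤ A := by
    have := Real.exp_le_exp.mpr hlogx
    rwa [Real.exp_log hx0, Real.exp_log hA0] at this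
  -- rewrite ρmax^((T+2)*(r-1)) as x^(T+2)
  have hpow : ρmax ^ ((T + 2) * (r - 1)) = x ^ (T + 2) := by
    rw [hxdef, ← pow_mul, Nat.mul_comm]
  have hkey : x * (Vmax + φ) ≤ Vmax * x ^ (T + 2) + φ := by
    have := (le_div_iff₀ hVφ).mp hxA
    rwa [hpow] at this
  intro ℓ hℓ
  have hb := hbound ℓ hℓ
  -- rewrite the sum as a geometric sum in x
  have hsum : (∑ τ ∈ Finset.range (ℓ + 1), ρmax ^ (τ * (r - 1)))
      = ∑ τ ∈ Finset.range (ℓ + 1), x ^ τ := by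
    refine Finset.sum_congr rfl fun τ _ => ?_
    rw [hxdef, ← pow_mul, Nat.mul_comm]
  rw [hsum] at hb
  set S := ∑ τ ∈ Finset.range (ℓ + 1), x ^ τ with hSdef
  have hgeom : S * (x - 1) = x ^ (ℓ + 1) - 1 := geom_sum_mul x (ℓ + 1)
  have hmono : x ^ (T + 2) ≤ x ^ (ℓ + 2) :=
    pow_le_pow_of_le_one hx0.le hx1.le (by omega)
  have hsplit : x ^ (ℓ + 2) = x * x ^ (ℓ + 1) := by ring
  have h1x : 0 < 1 - x := by linarith
  -- conclude
  have hfinal : Vmax * x * S ≤ φ := by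
    nlinarith [hgeom, hkey, hmono, hsplit, mul_pos hV hx0, hV.le, hφ.le]
  linarith
end
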